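/- arXiv:1905.12025 — 4 statements merged into one kernel-verified Lean document; each statement's English description precedes it below -/
import Mathlib

section
/- Let A be a ring and e ∈ A an idempotent such that the corner ring eAe is commutative. Regard eA as a left eAe-module, so that right multiplication gives a ring homomorphism from the opposite ring A^op to End_{eAe}(eA). If this homomorphism is an isomorphism, then the Satake map Z(A) → eAe, z ↦ e·z, is a ring isomorphism from the center of A onto eAe. -/
/-- Satake isomorphism: if `e` is an idempotent of `A` with commutative corner `eAe`,
and right multiplication `Aᵒᵖ → End_{eAe}(eA)` is an isomorphism (expressed by the
hypotheses `hsurj`, `hinj`), then the map `z ↦ e·z` from the center `Z(A)` to the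
corner `eAe` is bijective (and multiplicative). -/
theorem satake_map_bijective {A : Type*} [Ring A] (e : A) (he : e * e = e)
    (hcomm : ∀ x y : A, (e * x * e) * (e * y * e) = (e * y * e) * (e * x * e))
    (hsurj : ∀ f : A →+ A, (∀ m : A, e * m = m → e * f m = f m) →
        (∀ x m : A, e * m = m → f (e * x * e * m) = e * x * e * f m) →
        ∃ a : A, ∀ m : A, e * m = m → f m = m * a)
    (hinj : ∀ a : A, (∀ m : A, e * m = m → m * a = 0) → a = 0) :
    Function.Bijective (fun z : Subring.center A =>
      (⟨e * (z : A), by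
        have hz : e * (z : A) = (z : A) * e := Subring.mem_center_iff.mp z.2 e
        rw [← mul_assoc, he, mul_assoc, ← hz, ← mul_assoc, he]⟩ :
        {x : A // x = e * x * e})) ∧
    ∀ z w : Subring.center A,
      e * ((z : A) * (w : A)) = (e * (z : A)) * (e * (w : A)) := by
  refine ⟨⟨?_, ?_⟩, ?_⟩
  · -- injective
    intro z w h
    have h1 : e * (z : A) = e * (w : A) := congrArg Subtype.val h
    have hz := Subring.mem_center_iff.mp z.2
    have hw := Subring.mem_center_iff.mp w.2
    have : (z : A) - (w : A) = 0 := by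
      apply hinj
      intro m hm
      have : m * (z : A) = m * (w : A) := by
        calc m * (z : A) = (z : A) * m := (hz m)
          _ = (z : A) * (e * m) := by rw [hm]
          _ = (z : A) * e * m := by rw [mul_assoc]
          _ = e * (z : A) * m := by rw [hz e]
          _ = e * (w : A) * m := by rw [h1]
          _ = (w : A) * e * m := by rw [hw e]
          _ = (w : A) * (e * m) := by rw [mul_assoc]
          _ = (w : A) * m := by rw [hm]
          _ = m * (w : A) := (hw m).symm
      rw [mul_sub, this, sub_self]
    exact Subtype.ext (sub_eq_zero.mp this)
  · -- surjective
    rintro ⟨x, hx⟩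
    -- left multiplication by x as an AddMonoidHom
    set f : A →+ A := AddMonoidHom.mulLeft x with hf
    have hex : e * x = x := by rw [hx, ← mul_assoc, ← mul_assoc, he]
    have hf1 : ∀ m : A, e * m = m → e * f m = f m := by
      intro m _
      show e * (x * m) = x * m
      rw [← mul_assoc, hex]
    have hf2 : ∀ y m : A, e * m = m → f (e * y * e * m) = e * y * e * f m := by
      intro y m _
      show x * (e * y * e * m) = e * y * e * (x * m)
      have := hcomm x y
      rw [← hx] at this
      simp only [← mul_assoc] at this ⊢
      rw [this]
    obtain ⟨a, ha⟩ := hsurj f hf1 hf2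
    -- a is central
    have hacen : a ∈ Subring.center A := by
      rw [Subring.mem_center_iff]
      intro b
      have : b * a - a * b = 0 := by
        apply hinj
        intro m hm
        have h1 : m * (b * a) = x * (m * b) := by
          have hmb : e * (m * b) = m * b := by rw [← mul_assoc, hm]
          have := ha (m * b) hmb
          simpa [f, AddMonoidHom.mulLeft, mul_assoc] using this.symm
        have h2 : m * (a * b) = x * (m * b) := by
          have := ha m hm
          have hma : m * a = x * m := by simpa [f, AddMonoidHom.mulLeft] using this.symm
          rw [← mul_assoc, hma, mul_assoc]
        rw [mul_sub, h1, h2, sub_self]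
      exact sub_eq_zero.mp this
    refine ⟨⟨a, hacen⟩, ?_⟩
    apply Subtype.ext
    show e * a = x
    have := ha e (by rw [he])
    have hea : e * a = x * e := by simpa [f, AddMonoidHom.mulLeft] using this.symm
    rw [hea, hx, mul_assoc (e * x) e e, he]
  · -- multiplicative
    intro z w
    have hz := Subring.mem_center_iff.mp z.2
    calc e * ((z : A) * (w : A)) = e * (z : A) * (w : A) := by rw [mul_assoc]
      _ = e * (z : A) * (e * (w : A)) := by
          rw [hz e, mul_assoc, mul_assoc, ← mul_assoc e e, he]
      _ = (e * (z : A)) * (e * (w : A)) := rfl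
end

section
/- Let k be a field, A a k-algebra, V a simple A-module that is finite-dimensional over k, and e ∈ A an idempotent such that the subspace e·V of V has k-dimension exactly 1. Then every A-module endomorphism of V is multiplication by a scalar in k. -/
/-! An `A`-linear `φ` commutes with `e`, so it maps the line `e • V` into itself; a nonzero `w` on
that line is then an eigenvector, `φ w = c • w`, and by Schur's lemma the `A`-endomorphism
`φ - c • id`, which kills `w`, vanishes. -/

theorem LinearMap.eq_smul_id_of_apply_eq_smul {R S M : Type*} [Ring R] [AddCommGroup M]
    [Module R M] [IsSimpleModule R M] [Monoid S] [DistribMulAction S M] [SMulCommClass R S M]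
    (f : M →ₗ[R] M) {c : S} {v : M} (hv : v ≠ 0) (hfv : f v = c • v) :
    f = c • LinearMap.id := by
  set g : M →ₗ[R] M := f - c • LinearMap.id
  have hg : ¬Function.Injective g := fun hg_inj => hv (hg_inj (by simp [g, hfv]))
  exact sub_eq_zero.mp (g.injective_or_eq_zero.resolve_left hg)

theorem LinearMap.mapsTo_range_toLinearMap_smul {k A V W : Type*} [Semiring k] [Semiring A]
    [AddCommMonoid V] [Module k V] [Module A V] [SMulCommClass A k V]
    [AddCommMonoid W] [Module k W] [Module A W] [SMulCommClass A k W]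
    (φ : V →ₗ[A] W) (e : A) :
    Set.MapsTo φ (LinearMap.range (DistribSMul.toLinearMap k V e))
      (LinearMap.range (DistribSMul.toLinearMap k W e)) := by
  rintro _ ⟨u, rfl⟩
  exact ⟨φ u, (φ.map_smul e u).symm⟩

theorem Submodule.exists_apply_eq_smul_of_mapsTo_of_finrank_eq_one {k V : Type*} [DivisionRing k]
    [AddCommGroup V] [Module k V] {U : Submodule k V} (hU : Module.finrank k U = 1)
    {f : V → V} (hf : Set.MapsTo f U U) :
    ∃ c : k, ∃ u ∈ U, u ≠ 0 ∧ f u = c • u := by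
  obtain ⟨⟨u, hu⟩, hu0, -⟩ := finrank_eq_one_iff'.mp hU
  have hu0 : u ≠ 0 := by simpa using hu0
  have hfu : f u ∈ k ∙ u := by
    rw [← eq_span_singleton_of_mem_of_finrank_eq_one hU hu hu0]
    exact hf hu
  obtain ⟨c, hc⟩ := mem_span_singleton.mp hfu
  exact ⟨c, u, hu, hu0, hc.symm⟩

theorem schur_one_dimensional_vertex_general {k A V : Type*} [Field k] [Ring A]
    [AddCommGroup V] [Module k V] [Module A V]
    [SMulCommClass A k V] [IsSimpleModule A V]
    (e : A)
    (hdim : Module.finrank k (LinearMap.range (DistribMulAction.toLinearMap k V e)) = 1) :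
    ∀ φ : V →ₗ[A] V, ∃ c : k, ∀ v : V, φ v = c • v := by
  intro φ
  obtain ⟨c, w, -, hw0, hφw⟩ :=
    Submodule.exists_apply_eq_smul_of_mapsTo_of_finrank_eq_one hdim
      (φ.mapsTo_range_toLinearMap_smul e)
  exact ⟨c, LinearMap.congr_fun (φ.eq_smul_id_of_apply_eq_smul hw0 hφw)⟩

/-- Schur-type lemma: if `V` is a simple `A`-module, finite-dimensional over `k`,
and `e ∈ A` is an idempotent with `dim_k (e·V) = 1`, then every `A`-module
endomorphism of `V` is multiplication by a scalar in `k`. -/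
theorem schur_one_dimensional_vertex {k A V : Type*} [Field k] [Ring A] [Algebra k A]
    [AddCommGroup V] [Module k V] [Module A V] [IsScalarTower k A V]
    [SMulCommClass A k V] [IsSimpleModule A V] [FiniteDimensional k V]
    (e : A) (he : e * e = e)
    (hdim : Module.finrank k (LinearMap.range (DistribMulAction.toLinearMap k V e)) = 1) :
    ∀ φ : V →ₗ[A] V, ∃ c : k, ∀ v : V, φ v = c • v :=
  schur_one_dimensional_vertex_general e hdim
end

section
/- Let k be a field, A a k-algebra, V a simple A-module that is finite-dimensional over k, and e ∈ A an idempotent with dim_k(e·V) = 1. Then for every central element z ∈ Z(A), the action of z on V is multiplication by a scalar in k. -/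
/-! A central element `z` commutes with `e`, so it preserves the line `e • V` and acts on a
spanning vector `w` of that line by some scalar `c`. Since `V` is simple, `w` generates `V`
as an `A`-module, and centrality of `z` propagates `z • w = c • w` to all of `V`. -/

theorem DistribSMul.smul_mem_range_toLinearMap_of_commute {k A V : Type*} [Semiring k]
    [Monoid A] [AddCommMonoid V] [Module k V] [DistribMulAction A V] [SMulCommClass A k V]
    {z e : A} (hze : Commute z e) {x : V}
    (hx : x ∈ LinearMap.range (DistribSMul.toLinearMap k V e)) :
    z • x ∈ LinearMap.range (DistribSMul.toLinearMap k V e) := by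
  obtain ⟨u, rfl⟩ := hx
  exact ⟨z • u, by simp only [DistribSMul.toLinearMap_apply, smul_smul, hze.eq]⟩

theorem IsSimpleModule.smul_eq_smul_of_commute_of_ne_zero {k A V : Type*} [Ring A]
    [AddCommGroup V] [Module A V] [IsSimpleModule A V] [SMul k V] [SMulCommClass A k V]
    {z : A} (hz : ∀ a : A, Commute z a) {c : k} {w : V} (hw : w ≠ 0) (hzw : z • w = c • w)
    (v : V) : z • v = c • v := by
  obtain ⟨a, rfl⟩ := IsSimpleModule.toSpanSingleton_surjective A hw v
  calc z • a • w = a • z • w := by rw [smul_smul, (hz a).eq, mul_smul]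
    _ = c • a • w := by rw [hzw, smul_comm]

theorem central_element_acts_by_scalar_general {k A V : Type*} [Field k] [Ring A]
    [AddCommGroup V] [Module k V] [Module A V]
    [SMulCommClass A k V] [IsSimpleModule A V]
    (e : A)
    (hdim : Module.finrank k (LinearMap.range (DistribMulAction.toLinearMap k V e)) = 1) :
    ∀ z ∈ Subring.center A, ∃ c : k, ∀ v : V, z • v = c • v := by
  intro z hz
  have hcomm : ∀ a : A, Commute z a := fun a => (Subring.mem_center_iff.mp hz a).symm
  obtain ⟨w, hw0, hline⟩ := finrank_eq_one_iff'.mp hdim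
  obtain ⟨c, hc⟩ := hline
    ⟨z • (w : V), DistribSMul.smul_mem_range_toLinearMap_of_commute (hcomm e) w.2⟩
  have hw : (w : V) ≠ 0 := fun h => hw0 (Subtype.ext h)
  exact ⟨c, IsSimpleModule.smul_eq_smul_of_commute_of_ne_zero hcomm hw
    (congrArg Subtype.val hc).symm⟩

/-- If `V` is a simple `A`-module, finite-dimensional over `k`, and `e ∈ A` is an
idempotent with `dim_k (e·V) = 1`, then every central element of `A` acts on `V`
by a scalar in `k`. -/
theorem central_element_acts_by_scalar {k A V : Type*} [Field k] [Ring A] [Algebra k A]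
    [AddCommGroup V] [Module k V] [Module A V] [IsScalarTower k A V]
    [SMulCommClass A k V] [IsSimpleModule A V] [FiniteDimensional k V]
    (e : A) (he : e * e = e)
    (hdim : Module.finrank k (LinearMap.range (DistribMulAction.toLinearMap k V e)) = 1) :
    ∀ z ∈ Subring.center A, ∃ c : k, ∀ v : V, z • v = c • v :=
  central_element_acts_by_scalar_general e hdim
end

section
/- Let k be a field, A a k-algebra, and V₀, V₁, V₂ k-vector spaces. Suppose there is an exact sequence of A-bimodules 0 → A⊗_k V₂⊗_k A → A⊗_k V₁⊗_k A → A⊗_k V₀⊗_k A → A → 0 (where the bimodule structure on A⊗V⊗A is by outer multiplication). Then every left A-module M admits a projective resolution of length at most 2, obtained by applying −⊗_A M to the sequence; in particular the left global dimension of A is at most 2. -/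
/-!
Each `A ⊗ V ⊗ A` is free as a right `A`-module on `A ⊗ V`, and so is the last term `A`. Hence the
exact sequence splits by right `A`-linear maps: it has a contracting homotopy `s₀, s₁, s₂` of
right module maps. Applying the additive functor `- ⊗_A M` to the left `A`-linear differentials
and to this homotopy gives the complex `A ⊗ V₂ ⊗ M → A ⊗ V₁ ⊗ M → A ⊗ V₀ ⊗ M → M` with a
contracting homotopy, so it is exact, and its terms `A ⊗ (V ⊗ M)` are free left `A`-modules.
-/

open scoped TensorProduct

lemma LinearMap.exact_of_comp_add_comp_eq_id {R M N P : Type} [Ring R] [AddCommGroup M]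
    [AddCommGroup N] [AddCommGroup P] [Module R M] [Module R N] [Module R P]
    {f : M →ₗ[R] N} {g : N →ₗ[R] P} {s : N →ₗ[R] M} {t : P →ₗ[R] N}
    (hgf : g ∘ₗ f = 0) (hid : f ∘ₗ s + t ∘ₗ g = LinearMap.id) : Function.Exact f g :=
  exact_of_comp_of_mem_range hgf fun y hy => ⟨s y, by simpa [hy] using LinearMap.congr_fun hid y⟩

section RightAction

variable {k A : Type} [CommRing k] {X X' X'' : Type} [AddCommGroup X] [Module k X]
  [AddCommGroup X'] [Module k X'] [AddCommGroup X''] [Module k X'']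

/-- Right `A`-actions are encoded as `ρ b = (x ↦ x * b)`, a `k`-linear endomorphism. -/
def IsRightEquivariant (ρ : A → Module.End k X) (ρ' : A → Module.End k X')
    (h : X →ₗ[k] X') : Prop :=
  ∀ b x, h (ρ b x) = ρ' b (h x)

namespace IsRightEquivariant

variable {ρ : A → Module.End k X} {ρ' : A → Module.End k X'} {ρ'' : A → Module.End k X''}

lemma id : IsRightEquivariant ρ ρ LinearMap.id := fun _ _ => rfl

lemma comp {g : X' →ₗ[k] X''} {h : X →ₗ[k] X'} (hg : IsRightEquivariant ρ' ρ'' g)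
    (hh : IsRightEquivariant ρ ρ' h) : IsRightEquivariant ρ ρ'' (g ∘ₗ h) := fun b x => by
  rw [LinearMap.comp_apply, hh, hg, LinearMap.comp_apply]

lemma sub {g h : X →ₗ[k] X'} (hg : IsRightEquivariant ρ ρ' g)
    (hh : IsRightEquivariant ρ ρ' h) : IsRightEquivariant ρ ρ' (g - h) := fun b x => by
  rw [LinearMap.sub_apply, hg, hh, ← map_sub, LinearMap.sub_apply]

end IsRightEquivariant

variable [Ring A] (M : Type) [AddCommGroup M] [Module k M] [Module A M]

def IsBalanced {Z : Type} [AddCommGroup Z] [Module k Z] (ρ : A → Module.End k X)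
    (φ : X ⊗[k] M →ₗ[k] Z) : Prop :=
  ∀ b x m, φ (ρ b x ⊗ₜ m) = φ (x ⊗ₜ (b • m))

end RightAction

section Models

variable {k A : Type} [CommRing k] [Ring A]
  (M : Type) [AddCommGroup M] [Module k M] [Module A M]
  {X X' X'' Y Y' Y'' : Type}
  [AddCommGroup X] [Module k X] [Module A X] [SMulCommClass k A X]
  [AddCommGroup X'] [Module k X'] [Module A X'] [SMulCommClass k A X']
  [AddCommGroup X''] [Module k X''] [Module A X''] [SMulCommClass k A X'']
  [AddCommGroup Y] [Module k Y] [Module A Y]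
  [AddCommGroup Y'] [Module k Y'] [Module A Y']
  [AddCommGroup Y''] [Module k Y''] [Module A Y'']

/-- A concrete model `Y` of the balanced tensor product `X ⊗_A M` over the noncommutative ring
`A`: every balanced map out of `X ⊗[k] M` factors through `proj` via `sec`. -/
structure BalancedTensorModel (ρ : A → Module.End k X) (Y : Type) [AddCommGroup Y]
    [Module k Y] [Module A Y] where
  proj : X ⊗[k] M →ₗ[k] Y
  sec : Y →ₗ[k] X ⊗[k] M
  isBalanced_proj : IsBalanced M ρ proj
  proj_comp_sec : proj ∘ₗ sec = LinearMap.id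
  comp_sec_comp_proj {Z : Type} [AddCommGroup Z] [Module k Z] (φ : X ⊗[k] M →ₗ[k] Z) :
    IsBalanced M ρ φ → φ ∘ₗ sec ∘ₗ proj = φ
  proj_smul (a : A) (t : X ⊗[k] M) : proj (a • t) = a • proj t

namespace BalancedTensorModel

variable {M} {ρ : A → Module.End k X} {ρ' : A → Module.End k X'} {ρ'' : A → Module.End k X''}
  (P : BalancedTensorModel M ρ Y) (Q : BalancedTensorModel M ρ' Y')
  (R : BalancedTensorModel M ρ'' Y'')

def map (h : X →ₗ[k] X') : Y →ₗ[k] Y' := Q.proj ∘ₗ h.rTensor M ∘ₗ P.sec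

variable {P Q} in
lemma map_comp_proj {h : X →ₗ[k] X'} (hh : IsRightEquivariant ρ ρ' h) :
    P.map Q h ∘ₗ P.proj = Q.proj ∘ₗ h.rTensor M :=
  P.comp_sec_comp_proj (Q.proj ∘ₗ h.rTensor M) fun b x m => by
    simpa [hh b x] using Q.isBalanced_proj b (h x) m

variable {P Q R} in
lemma map_comp {g : X' →ₗ[k] X''} (hg : IsRightEquivariant ρ' ρ'' g) (h : X →ₗ[k] X') :
    Q.map R g ∘ₗ P.map Q h = P.map R (g ∘ₗ h) :=
  calc Q.map R g ∘ₗ P.map Q h = (Q.map R g ∘ₗ Q.proj) ∘ₗ h.rTensor M ∘ₗ P.sec := rfl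
    _ = P.map R (g ∘ₗ h) := by rw [map_comp_proj hg, map, LinearMap.rTensor_comp]; rfl

lemma map_id : P.map P LinearMap.id = LinearMap.id := by
  rw [map, LinearMap.rTensor_id, LinearMap.id_comp, P.proj_comp_sec]

lemma map_add (g h : X →ₗ[k] X') : P.map Q (g + h) = P.map Q g + P.map Q h := by
  simp only [map, LinearMap.rTensor_add, LinearMap.add_comp, LinearMap.comp_add]

lemma map_zero : P.map Q 0 = 0 := by
  simp only [map, LinearMap.rTensor_zero, LinearMap.zero_comp, LinearMap.comp_zero]

lemma map_apply_smul {h : X →ₗ[k] X'} (hh : IsRightEquivariant ρ ρ' h)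
    (hl : ∀ (a : A) x, h (a • x) = a • h x) (a : A) (y : Y) :
    P.map Q h (a • y) = a • P.map Q h y := by
  have hl' : ∀ t : X ⊗[k] M, h.rTensor M (a • t) = a • h.rTensor M t := by
    intro t
    induction t using TensorProduct.induction_on with
    | zero => simp
    | tmul x m => simp [TensorProduct.smul_tmul', hl]
    | add t₁ t₂ h₁ h₂ => simp only [smul_add, _root_.map_add, h₁, h₂]
  calc P.map Q h (a • y) = P.map Q h (P.proj (a • P.sec y)) := by
        rw [P.proj_smul, ← LinearMap.comp_apply P.proj, P.proj_comp_sec, LinearMap.id_apply]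
    _ = a • P.map Q h y := by
        rw [← LinearMap.comp_apply (P.map Q h), map_comp_proj hh, LinearMap.comp_apply, hl',
          Q.proj_smul]
        rfl

def mapₗ {h : X →ₗ[k] X'} (hh : IsRightEquivariant ρ ρ' h)
    (hl : ∀ (a : A) x, h (a • x) = a • h x) : Y →ₗ[A] Y' where
  toFun := P.map Q h
  map_add' := _root_.map_add _
  map_smul' := P.map_apply_smul Q hh hl

variable {P Q R}

lemma injective_map {f : X →ₗ[k] X'} {s : X' →ₗ[k] X} (hs : IsRightEquivariant ρ' ρ s)
    (hsf : s ∘ₗ f = LinearMap.id) : Function.Injective (P.map Q f) := by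
  refine Function.LeftInverse.injective (g := Q.map P s) fun y => ?_
  rw [← LinearMap.comp_apply, map_comp hs, hsf, map_id, LinearMap.id_apply]

lemma surjective_map {f : X →ₗ[k] X'} {s : X' →ₗ[k] X} (hf : IsRightEquivariant ρ ρ' f)
    (hfs : f ∘ₗ s = LinearMap.id) : Function.Surjective (P.map Q f) := by
  refine Function.RightInverse.surjective (g := Q.map P s) fun y => ?_
  rw [← LinearMap.comp_apply, map_comp hf, hfs, map_id, LinearMap.id_apply]

lemma exact_map {f : X →ₗ[k] X'} {g : X' →ₗ[k] X''} {s : X' →ₗ[k] X}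
    {t : X'' →ₗ[k] X'} (hf : IsRightEquivariant ρ ρ' f) (hg : IsRightEquivariant ρ' ρ'' g)
    (ht : IsRightEquivariant ρ'' ρ' t)
    (hgf : g ∘ₗ f = 0) (hid : f ∘ₗ s + t ∘ₗ g = LinearMap.id) :
    Function.Exact (P.map Q f) (Q.map R g) := by
  refine LinearMap.exact_of_comp_add_comp_eq_id (s := Q.map P s) (t := R.map Q t) ?_ ?_
  · rw [map_comp hg, hgf, map_zero]
  · rw [map_comp hf, map_comp ht, ← map_add, hid, map_id]

variable (M) [Algebra k A] [IsScalarTower k A M]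

def self : BalancedTensorModel M (fun b : A => LinearMap.mulRight k b) M where
  proj := TensorProduct.lift (Algebra.lsmul k k M).toLinearMap
  sec := TensorProduct.mk k A M 1
  isBalanced_proj b x m := by simp
  proj_comp_sec := by ext m; simp
  comp_sec_comp_proj φ hφ := by ext a m; simpa using (hφ a 1 m).symm
  proj_smul a t := by
    induction t using TensorProduct.induction_on with
    | zero => simp
    | tmul b m => simp [TensorProduct.smul_tmul']
    | add t₁ t₂ h₁ h₂ => simp only [smul_add, _root_.map_add, h₁, h₂]

end BalancedTensorModel

end Models

namespace FreeBimodule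

variable {k A : Type} [CommRing k] [Ring A] [Algebra k A] (V : Type) [AddCommGroup V] [Module k V]

def rightMul : A →ₗ[k] Module.End k (A ⊗[k] (V ⊗[k] A)) :=
  LinearMap.lTensorHom A ∘ₗ LinearMap.lTensorHom V ∘ₗ (LinearMap.mul k A).flip

@[simp] lemma rightMul_tmul (b a : A) (v : V) (c : A) :
    rightMul V b (a ⊗ₜ[k] (v ⊗ₜ[k] c)) = a ⊗ₜ (v ⊗ₜ (c * b)) := rfl

lemma rightMul_rightMul (b c : A) (x : A ⊗[k] (V ⊗[k] A)) :
    rightMul V b (rightMul V c x) = rightMul V (c * b) x := by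
  rw [← Module.End.mul_apply]
  congr 1
  ext a v d
  simp [mul_assoc]

@[simp] lemma rightMul_one (x : A ⊗[k] (V ⊗[k] A)) : rightMul V 1 x = x :=
  LinearMap.congr_fun (f := rightMul V 1) (g := LinearMap.id) (by ext; simp) x

variable (M : Type) [AddCommGroup M] [Module k M] [Module A M] [IsScalarTower k A M]

variable (k A) in
def contract : (A ⊗[k] (V ⊗[k] A)) ⊗[k] M →ₗ[k] A ⊗[k] (V ⊗[k] M) :=
  ((BalancedTensorModel.self M).proj.lTensor V ∘ₗ
      (TensorProduct.assoc k V A M).toLinearMap).lTensor A ∘ₗ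
    (TensorProduct.assoc k A (V ⊗[k] A) M).toLinearMap

@[simp] lemma contract_tmul (a : A) (v : V) (c : A) (m : M) :
    contract k A V M ((a ⊗ₜ (v ⊗ₜ c)) ⊗ₜ m) = a ⊗ₜ (v ⊗ₜ (c • m)) := rfl

variable (k A) in
def insertOne : A ⊗[k] (V ⊗[k] M) →ₗ[k] (A ⊗[k] (V ⊗[k] A)) ⊗[k] M :=
  (TensorProduct.assoc k A (V ⊗[k] A) M).symm.toLinearMap ∘ₗ
    ((TensorProduct.assoc k V A M).symm.toLinearMap ∘ₗ
      (BalancedTensorModel.self M).sec.lTensor V).lTensor A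

@[simp] lemma insertOne_tmul (a : A) (v : V) (m : M) :
    insertOne k A V M (a ⊗ₜ (v ⊗ₜ m)) = (a ⊗ₜ (v ⊗ₜ 1)) ⊗ₜ m := rfl

def tensorModel : BalancedTensorModel M ⇑(rightMul (k := k) (A := A) V) (A ⊗[k] (V ⊗[k] M)) where
  proj := contract k A V M
  sec := insertOne k A V M
  isBalanced_proj b x m :=
    LinearMap.congr_fun (f := contract k A V M ∘ₗ (TensorProduct.mk k _ M).flip m ∘ₗ rightMul V b)
      (g := contract k A V M ∘ₗ (TensorProduct.mk k _ M).flip (b • m))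
      (by ext a v c; simp [mul_smul]) x
  proj_comp_sec := by ext a v m; simp
  comp_sec_comp_proj φ hφ := by
    ext a v c m
    simpa using (hφ c (a ⊗ₜ (v ⊗ₜ 1)) m).symm
  proj_smul a t :=
    LinearMap.congr_fun (f := contract k A V M ∘ₗ DistribSMul.toLinearMap k _ a)
      (g := DistribSMul.toLinearMap k _ a ∘ₗ contract k A V M)
      (by ext b v c m; simp [TensorProduct.smul_tmul']) t

section Lifting

variable {V} {U W X : Type} [AddCommGroup U] [Module k U] [AddCommGroup W] [Module k W]
  [AddCommGroup X] [Module k X]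

lemma ext_of_isRightEquivariant {ρ : A → Module.End k X} {g h : A ⊗[k] (V ⊗[k] A) →ₗ[k] X}
    (hg : IsRightEquivariant (rightMul V) ρ g) (hh : IsRightEquivariant (rightMul V) ρ h)
    (heq : ∀ a v, g (a ⊗ₜ (v ⊗ₜ 1)) = h (a ⊗ₜ (v ⊗ₜ 1))) : g = h := by
  ext a v c
  have hc : a ⊗ₜ[k] (v ⊗ₜ[k] c) = rightMul V c (a ⊗ₜ (v ⊗ₜ 1)) := by simp
  change g (a ⊗ₜ (v ⊗ₜ c)) = h (a ⊗ₜ (v ⊗ₜ c))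
  rw [hc, hg, hh, heq]

def extend (ℓ : A ⊗[k] V →ₗ[k] A ⊗[k] (W ⊗[k] A)) : A ⊗[k] (V ⊗[k] A) →ₗ[k] A ⊗[k] (W ⊗[k] A) :=
  TensorProduct.lift ((rightMul W).flip ∘ₗ ℓ) ∘ₗ (TensorProduct.assoc k A V A).symm.toLinearMap

@[simp] lemma extend_tmul (ℓ : A ⊗[k] V →ₗ[k] A ⊗[k] (W ⊗[k] A)) (a : A) (v : V) (c : A) :
    extend ℓ (a ⊗ₜ (v ⊗ₜ c)) = rightMul W c (ℓ (a ⊗ₜ v)) := rfl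

lemma isRightEquivariant_extend (ℓ : A ⊗[k] V →ₗ[k] A ⊗[k] (W ⊗[k] A)) :
    IsRightEquivariant (rightMul V) (rightMul W) (extend ℓ) := fun b x =>
  LinearMap.congr_fun (f := extend ℓ ∘ₗ rightMul V b) (g := rightMul W b ∘ₗ extend ℓ)
    (by ext a v c; simp [rightMul_rightMul]) x

lemma exists_rightEquivariant_lift [Module.Projective k (A ⊗[k] V)]
    {f : A ⊗[k] (U ⊗[k] A) →ₗ[k] A ⊗[k] (W ⊗[k] A)} {π : A ⊗[k] (V ⊗[k] A) →ₗ[k] A ⊗[k] (W ⊗[k] A)}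
    (hf : IsRightEquivariant (rightMul U) (rightMul W) f)
    (hπ : IsRightEquivariant (rightMul V) (rightMul W) π)
    (hrange : LinearMap.range π ≤ LinearMap.range f) :
    ∃ s, IsRightEquivariant (rightMul V) (rightMul U) s ∧ f ∘ₗ s = π := by
  obtain ⟨ℓ, hℓ⟩ := Module.projective_lifting_property f.rangeRestrict
    (LinearMap.codRestrict _ (π ∘ₗ (TensorProduct.assoc k A V A).toLinearMap ∘ₗ
      (TensorProduct.mk k _ A).flip 1) fun u => hrange ⟨_, rfl⟩) f.surjective_rangeRestrict
  refine ⟨extend ℓ, isRightEquivariant_extend ℓ, ext_of_isRightEquivariant ?_ hπ fun a v => ?_⟩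
  · exact hf.comp (isRightEquivariant_extend ℓ)
  · simpa using congr_arg Subtype.val (LinearMap.congr_fun hℓ (a ⊗ₜ v))

end Lifting

variable {V₀ V₁ V₂ : Type} [AddCommGroup V₀] [Module k V₀] [AddCommGroup V₁] [Module k V₁]
  [AddCommGroup V₂] [Module k V₂]

theorem exists_rightEquivariant_contraction
    [Module.Projective k (A ⊗[k] V₀)] [Module.Projective k (A ⊗[k] V₁)]
    {f₂ : A ⊗[k] (V₂ ⊗[k] A) →ₗ[k] A ⊗[k] (V₁ ⊗[k] A)}
    {f₁ : A ⊗[k] (V₁ ⊗[k] A) →ₗ[k] A ⊗[k] (V₀ ⊗[k] A)} {f₀ : A ⊗[k] (V₀ ⊗[k] A) →ₗ[k] A}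
    (h₂ : IsRightEquivariant (rightMul V₂) (rightMul V₁) f₂)
    (h₁ : IsRightEquivariant (rightMul V₁) (rightMul V₀) f₁)
    (h₀ : IsRightEquivariant (rightMul V₀) (fun b => LinearMap.mulRight k b) f₀)
    (hinj : Function.Injective f₂) (hex₁ : LinearMap.range f₂ = LinearMap.ker f₁)
    (hex₀ : LinearMap.range f₁ = LinearMap.ker f₀) (hsurj : Function.Surjective f₀) :
    ∃ (s₀ : A →ₗ[k] A ⊗[k] (V₀ ⊗[k] A)) (s₁ : A ⊗[k] (V₀ ⊗[k] A) →ₗ[k] A ⊗[k] (V₁ ⊗[k] A))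
      (s₂ : A ⊗[k] (V₁ ⊗[k] A) →ₗ[k] A ⊗[k] (V₂ ⊗[k] A)),
      IsRightEquivariant (fun b => LinearMap.mulRight k b) (rightMul V₀) s₀ ∧
      IsRightEquivariant (rightMul V₀) (rightMul V₁) s₁ ∧
      IsRightEquivariant (rightMul V₁) (rightMul V₂) s₂ ∧
      f₀ ∘ₗ s₀ = LinearMap.id ∧ f₁ ∘ₗ s₁ + s₀ ∘ₗ f₀ = LinearMap.id ∧
      f₂ ∘ₗ s₂ + s₁ ∘ₗ f₁ = LinearMap.id ∧ s₂ ∘ₗ f₂ = LinearMap.id := by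
  have hf₀f₁ : f₀ ∘ₗ f₁ = 0 := LinearMap.range_le_ker_iff.mp hex₀.le
  have hf₁f₂ : f₁ ∘ₗ f₂ = 0 := LinearMap.range_le_ker_iff.mp hex₁.le
  obtain ⟨p₀, hp₀⟩ := hsurj 1
  set s₀ := (rightMul V₀).flip p₀
  have hs₀ : IsRightEquivariant (fun b => LinearMap.mulRight k b) (rightMul V₀) s₀ :=
    fun b c => (rightMul_rightMul V₀ b c p₀).symm
  have hf₀s₀ : f₀ ∘ₗ s₀ = LinearMap.id := by
    ext b
    simp [s₀, h₀ b p₀, hp₀]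
  -- `s₁` lifts `id - s₀ ∘ f₀`, which lands in `ker f₀ = range f₁`; likewise for `s₂`.
  obtain ⟨s₁, hs₁, hf₁s₁⟩ :=
      exists_rightEquivariant_lift h₁ (IsRightEquivariant.id.sub (hs₀.comp h₀)) <| by
    rw [hex₀, LinearMap.range_le_ker_iff, LinearMap.comp_sub, ← LinearMap.comp_assoc, hf₀s₀,
      LinearMap.comp_id, LinearMap.id_comp, sub_self]
  obtain ⟨s₂, hs₂, hf₂s₂⟩ :=
      exists_rightEquivariant_lift h₂ (IsRightEquivariant.id.sub (hs₁.comp h₁)) <| by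
    rw [hex₁, LinearMap.range_le_ker_iff]
    refine LinearMap.ext fun x => ?_
    have h := LinearMap.congr_fun hf₁s₁ (f₁ x)
    have h' := LinearMap.congr_fun hf₀f₁ x
    simp only [LinearMap.comp_apply, LinearMap.sub_apply, LinearMap.id_apply,
      LinearMap.zero_apply] at h h' ⊢
    rw [map_sub, h, h', map_zero, sub_zero, sub_self]
  refine ⟨s₀, s₁, s₂, hs₀, hs₁, hs₂, hf₀s₀, by rw [hf₁s₁]; abel, by rw [hf₂s₂]; abel, ?_⟩
  refine LinearMap.ext fun x => hinj ?_
  rw [← LinearMap.comp_apply f₂, ← LinearMap.comp_assoc, hf₂s₂, LinearMap.sub_comp,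
    LinearMap.comp_assoc, hf₁f₂]
  simp

end FreeBimodule

/-- If `A` admits an exact sequence of `A`-bimodules
`0 → A⊗V₂⊗A → A⊗V₁⊗A → A⊗V₀⊗A → A → 0` (bimodule maps expressed as `k`-linear
maps commuting with the outer left and right `A`-actions), then every left
`A`-module admits a projective resolution of length at most 2; in particular the
left global dimension of `A` is at most 2. -/
theorem bimodule_resolution_implies_global_dimension_le_two
    {k A V₀ V₁ V₂ : Type} [Field k] [Ring A] [Algebra k A]
    [AddCommGroup V₀] [Module k V₀] [AddCommGroup V₁] [Module k V₁]
    [AddCommGroup V₂] [Module k V₂]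
    (f₂ : (A ⊗[k] (V₂ ⊗[k] A)) →ₗ[k] (A ⊗[k] (V₁ ⊗[k] A)))
    (f₁ : (A ⊗[k] (V₁ ⊗[k] A)) →ₗ[k] (A ⊗[k] (V₀ ⊗[k] A)))
    (f₀ : (A ⊗[k] (V₀ ⊗[k] A)) →ₗ[k] A)
    (hleft₂ : ∀ (a : A) x, f₂ (a • x) = a • f₂ x)
    (hleft₁ : ∀ (a : A) x, f₁ (a • x) = a • f₁ x)
    (hleft₀ : ∀ (a : A) x, f₀ (a • x) = a • f₀ x)
    (hright₂ : ∀ (b : A) x,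
      f₂ (LinearMap.lTensor A (LinearMap.lTensor V₂ (LinearMap.mulRight k b)) x) =
        LinearMap.lTensor A (LinearMap.lTensor V₁ (LinearMap.mulRight k b)) (f₂ x))
    (hright₁ : ∀ (b : A) x,
      f₁ (LinearMap.lTensor A (LinearMap.lTensor V₁ (LinearMap.mulRight k b)) x) =
        LinearMap.lTensor A (LinearMap.lTensor V₀ (LinearMap.mulRight k b)) (f₁ x))
    (hright₀ : ∀ (b : A) x,
      f₀ (LinearMap.lTensor A (LinearMap.lTensor V₀ (LinearMap.mulRight k b)) x) =
        f₀ x * b)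
    (hinj : Function.Injective f₂)
    (hex₁ : LinearMap.range f₂ = LinearMap.ker f₁)
    (hex₀ : LinearMap.range f₁ = LinearMap.ker f₀)
    (hsurj : Function.Surjective f₀) :
    ∀ (M : Type) (_ : AddCommGroup M) (_ : Module A M),
      ∃ (P₂ P₁ P₀ : Type) (_ : AddCommGroup P₂) (_ : AddCommGroup P₁)
        (_ : AddCommGroup P₀) (_ : Module A P₂) (_ : Module A P₁) (_ : Module A P₀)
        (g₂ : P₂ →ₗ[A] P₁) (g₁ : P₁ →ₗ[A] P₀) (g₀ : P₀ →ₗ[A] M),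
        Module.Projective A P₂ ∧ Module.Projective A P₁ ∧ Module.Projective A P₀ ∧
        Function.Injective g₂ ∧ LinearMap.range g₂ = LinearMap.ker g₁ ∧
        LinearMap.range g₁ = LinearMap.ker g₀ ∧ Function.Surjective g₀ := by
  intro M _ _
  let _ : Module k M := Module.compHom M (algebraMap k A)
  have : IsScalarTower k A M := IsScalarTower.of_compHom k A M
  obtain ⟨s₀, s₁, s₂, hs₀, hs₁, hs₂, hf₀s₀, hid₀, hid₁, hs₂f₂⟩ :=
    FreeBimodule.exists_rightEquivariant_contraction hright₂ hright₁ hright₀ hinj hex₁ hex₀ hsurj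
  let P₂ := FreeBimodule.tensorModel (k := k) (A := A) V₂ M
  let P₁ := FreeBimodule.tensorModel (k := k) (A := A) V₁ M
  let P₀ := FreeBimodule.tensorModel (k := k) (A := A) V₀ M
  let Q := BalancedTensorModel.self (k := k) (A := A) M
  let g₂ := P₂.mapₗ P₁ hright₂ hleft₂
  let g₁ := P₁.mapₗ P₀ hright₁ hleft₁
  let g₀ := P₀.mapₗ Q hright₀ hleft₀
  have hexact₁ : Function.Exact g₂ g₁ :=
    BalancedTensorModel.exact_map (P := P₂) (Q := P₁) (R := P₀) hright₂ hright₁ hs₁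
      (LinearMap.range_le_ker_iff.mp hex₁.le) hid₁
  have hexact₀ : Function.Exact g₁ g₀ :=
    BalancedTensorModel.exact_map (P := P₁) (Q := P₀) (R := Q) hright₁ hright₀ hs₀
      (LinearMap.range_le_ker_iff.mp hex₀.le) hid₀
  exact ⟨_, _, _, _, _, _, _, _, _, g₂, g₁, g₀, inferInstance, inferInstance, inferInstance,
    BalancedTensorModel.injective_map (P := P₂) (Q := P₁) hs₂ hs₂f₂,
    hexact₁.linearMap_ker_eq.symm, hexact₀.linearMap_ker_eq.symm,
    BalancedTensorModel.surjective_map (P := P₀) (Q := Q) hright₀ hf₀s₀⟩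
end
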